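/- arXiv:2110.07915 — 11 statements merged into one kernel-verified Lean document; each statement's English description precedes it below -/
import Mathlib

section
/- Let V be a finite-dimensional vector space over a field k and let Θ : V^d → k be a nondegenerate d-linear form (i.e., the only u ∈ V with Θ(v_1,...,u,...,v_{d-1}) = 0 for all placements of u and all v_i is u = 0). Then the center Z(V,Θ) = {φ ∈ End(V) : Θ(v_1,...,φ(v_i),...,v_j,...,v_d) = Θ(v_1,...,v_i,...,φ(v_j),...,v_d) for all i,j and all v_k ∈ V} is closed under composition. -/
open Function

/-- The center condition: `φ` is self-adjoint with respect to the multilinear map `Θ`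
in every pair of slots. -/
def InCenter {k : Type*} [Field k] {d : ℕ} {V T : Type*} [AddCommGroup V] [Module k V]
    [AddCommGroup T] [Module k T]
    (Θ : MultilinearMap k (fun _ : Fin d => V) T) (φ : V →ₗ[k] V) : Prop :=
  ∀ (i j : Fin d) (v : Fin d → V),
    Θ (Function.update v i (φ (v i))) = Θ (Function.update v j (φ (v j)))

/-- Nondegeneracy of a multilinear map: the only vector annihilating it in some slot
against all others is `0`. -/
def Nondeg {k : Type*} [Field k] {d : ℕ} {V T : Type*} [AddCommGroup V] [Module k V]
    [AddCommGroup T] [Module k T]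
    (Θ : MultilinearMap k (fun _ : Fin d => V) T) : Prop :=
  ∀ u : V, (∀ (i : Fin d) (v : Fin d → V), Θ (Function.update v i u) = 0) → u = 0

/-!
Self-adjointness lets `φ` and `ψ` move freely between slots. Moving `φ` out of `φ ∘ ψ` in
slot `i` into another slot `j` leaves `ψ` in `i` and `φ` in `j`; with a third slot `l`
available (this is where `d ≥ 3` enters), `ψ` can be parked in `l` while `φ` crosses from
`j` to `i`, which exchanges the positions of `φ` and `ψ`. Reassembling `φ ∘ ψ` in slot `j`
finishes the proof.
-/

namespace InCenter

variable {k : Type*} [Field k] {d : ℕ} {V T : Type*} [AddCommGroup V] [Module k V]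
  [AddCommGroup T] [Module k T] {Θ : MultilinearMap k (fun _ : Fin d => V) T}
  {φ ψ : V →ₗ[k] V}

theorem map_update_comp (hφ : InCenter Θ φ) (ψ : V →ₗ[k] V) {i j : Fin d} (hij : i ≠ j)
    (v : Fin d → V) :
    Θ (update v i (φ (ψ (v i)))) = Θ (update (update v i (ψ (v i))) j (φ (v j))) := by
  simpa [hij.symm] using hφ i j (update v i (ψ (v i)))

theorem map_update_update_comm (hφ : InCenter Θ φ) (hψ : InCenter Θ ψ) {i j l : Fin d}
    (hij : i ≠ j) (hli : l ≠ i) (hlj : l ≠ j) (v : Fin d → V) :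
    Θ (update (update v i (ψ (v i))) j (φ (v j))) =
      Θ (update (update v i (φ (v i))) j (ψ (v j))) :=
  calc Θ (update (update v i (ψ (v i))) j (φ (v j)))
      = Θ (update (update v j (φ (v j))) l (ψ (v l))) := by
        simpa [hij, hlj, update_comm hij] using hψ i l (update v j (φ (v j)))
    _ = Θ (update (update v i (φ (v i))) l (ψ (v l))) := by
        simpa [hli.symm, hlj.symm, update_comm hli, update_comm hlj] using
          hφ j i (update v l (ψ (v l)))
    _ = Θ (update (update v i (φ (v i))) j (ψ (v j))) := by
        simpa [hli, hij.symm] using hψ l j (update v i (φ (v i)))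

end InCenter

theorem center_closed_under_comp_general {k : Type*} [Field k] {d : ℕ} (hd : 3 ≤ d)
    {V : Type*} [AddCommGroup V] [Module k V]
    (Θ : MultilinearMap k (fun _ : Fin d => V) k)
    (φ ψ : V →ₗ[k] V) (hφ : InCenter Θ φ) (hψ : InCenter Θ ψ) :
    InCenter Θ (φ ∘ₗ ψ) := by
  intro i j v
  rcases eq_or_ne i j with rfl | hij
  · rfl
  obtain ⟨l, hli, hlj⟩ := Fin.exists_ne_and_ne_of_two_lt i j hd
  calc Θ (update v i (φ (ψ (v i))))
      = Θ (update (update v i (ψ (v i))) j (φ (v j))) := hφ.map_update_comp ψ hij v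
    _ = Θ (update (update v i (φ (v i))) j (ψ (v j))) :=
        hφ.map_update_update_comm hψ hij hli hlj v
    _ = Θ (update v j (φ (ψ (v j)))) := by
        rw [update_comm hij, hφ.map_update_comp ψ hij.symm v]

/-- the center of a nondegenerate multilinear form is closed under
composition. -/
theorem center_closed_under_comp {k : Type*} [Field k] {d : ℕ} (hd : 3 ≤ d)
    {V : Type*} [AddCommGroup V] [Module k V] [FiniteDimensional k V]
    (Θ : MultilinearMap k (fun _ : Fin d => V) k) (hΘ : Nondeg Θ)
    (φ ψ : V →ₗ[k] V) (hφ : InCenter Θ φ) (hψ : InCenter Θ ψ) :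
    InCenter Θ (φ ∘ₗ ψ) :=
  center_closed_under_comp_general hd Θ φ ψ hφ hψ
end

section
/- Let Θ : V^d → k be a nondegenerate d-linear form on a finite-dimensional k-vector space V. Then any two elements φ, ψ of the center Z(V,Θ) commute: φ ∘ ψ = ψ ∘ φ. -/
open Function

/-!
The center is commutative because each of its elements can be moved freely between slots of
`Θ`. Given three distinct slots `i, j, l`, the composite `φ ψ` in slot `i` can be pulled apart
into `φ` in slot `j` and `ψ` in slot `l`; the same is true of `ψ φ`, so `φ ψ x` and `ψ φ x`
pair identically against everything, and nondegeneracy makes them equal.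
-/

theorem Fintype.exists_ne_ne_of_three_le_card {α : Type*} [Fintype α]
    (h : 3 ≤ Fintype.card α) (i : α) : ∃ j l : α, i ≠ j ∧ i ≠ l ∧ j ≠ l := by
  classical
  have hcard : 1 < (Finset.univ.erase i).card := by
    rw [Finset.card_erase_of_mem (Finset.mem_univ i), Finset.card_univ]
    omega
  obtain ⟨j, hj, l, hl, hjl⟩ := Finset.one_lt_card.mp hcard
  exact ⟨j, l, (Finset.ne_of_mem_erase hj).symm, (Finset.ne_of_mem_erase hl).symm, hjl⟩

section

variable {k : Type*} [Field k] {d : ℕ} {V T : Type*} [AddCommGroup V] [Module k V]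
  [AddCommGroup T] [Module k T] {Θ : MultilinearMap k (fun _ : Fin d => V) T}

theorem Nondeg.eq_of_forall_map_update_eq (hΘ : Nondeg Θ) {u w : V}
    (h : ∀ (i : Fin d) (v : Fin d → V), Θ (update v i u) = Θ (update v i w)) : u = w := by
  rw [← sub_eq_zero]
  refine hΘ _ fun i v => ?_
  rw [Θ.map_update_sub, h, sub_self]

theorem InCenter.map_update_apply {φ : V →ₗ[k] V} (hφ : InCenter Θ φ) {i j : Fin d}
    (hij : i ≠ j) (v : Fin d → V) (x : V) :
    Θ (update v i (φ x)) = Θ (update (update v i x) j (φ (v j))) := by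
  simpa [update_of_ne hij.symm] using hφ i j (update v i x)

theorem InCenter.map_update_comp_comm {φ ψ : V →ₗ[k] V} (hφ : InCenter Θ φ)
    (hψ : InCenter Θ ψ) {i j l : Fin d} (hij : i ≠ j) (hil : i ≠ l) (hjl : j ≠ l)
    (v : Fin d → V) (x : V) :
    Θ (update v i (φ (ψ x))) = Θ (update v i (ψ (φ x))) := by
  calc Θ (update v i (φ (ψ x)))
      = Θ (update (update v j (φ (v j))) i (ψ x)) := by
        rw [hφ.map_update_apply hij, update_comm hij]
    _ = Θ (update (update (update v j (φ (v j))) i x) l (ψ (v l))) := by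
        rw [hψ.map_update_apply hil, update_of_ne hjl.symm]
    _ = Θ (update (update (update v l (ψ (v l))) i x) j (φ (v j))) := by
        rw [update_comm hij.symm, update_comm hjl, update_comm hil]
    _ = Θ (update (update v l (ψ (v l))) i (φ x)) := by
        rw [hφ.map_update_apply hij, update_of_ne hjl]
    _ = Θ (update v i (ψ (φ x))) := by
        rw [← update_comm hil, ← hψ.map_update_apply hil]

end

theorem center_comm_general {k : Type*} [Field k] {d : ℕ} (hd : 3 ≤ d)
    {V : Type*} [AddCommGroup V] [Module k V]
    (Θ : MultilinearMap k (fun _ : Fin d => V) k) (hΘ : Nondeg Θ)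
    (φ ψ : V →ₗ[k] V) (hφ : InCenter Θ φ) (hψ : InCenter Θ ψ) :
    φ ∘ₗ ψ = ψ ∘ₗ φ := by
  ext x
  refine hΘ.eq_of_forall_map_update_eq fun i v => ?_
  obtain ⟨j, l, hij, hil, hjl⟩ :=
    Fintype.exists_ne_ne_of_three_le_card (by rwa [Fintype.card_fin]) i
  exact hφ.map_update_comp_comm hψ hij hil hjl v x

/-- any two elements of the center of a nondegenerate multilinear form
commute. -/
theorem center_comm {k : Type*} [Field k] {d : ℕ} (hd : 3 ≤ d)
    {V : Type*} [AddCommGroup V] [Module k V] [FiniteDimensional k V]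
    (Θ : MultilinearMap k (fun _ : Fin d => V) k) (hΘ : Nondeg Θ)
    (φ ψ : V →ₗ[k] V) (hφ : InCenter Θ φ) (hψ : InCenter Θ ψ) :
    φ ∘ₗ ψ = ψ ∘ₗ φ :=
  center_comm_general hd Θ hΘ φ ψ hφ hψ
end

section
/- Let Θ : V^d → k be a nondegenerate d-linear form. Then Z(V,Θ) is a commutative subalgebra of End(V): it contains the identity, is closed under scalar multiplication, addition, and composition, and composition is commutative on it. -/
/-
A product `φ ψ` acting in slot `i` can be split into `ψ` in slot `i` and `φ` in any other
slot `l`. With a third slot available, `ψ` can then be moved between slots while `φ` sits in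
the third one, so `φ ψ` is again in the center. Splitting `φ ψ` at `i` and `ψ φ` at `l`
gives the same configuration, so `Θ(…, φ ψ v_i, …) = Θ(…, ψ φ v_l, …)`; moving `ψ φ` back
from `l` to `i` shows that `φ ψ v - ψ φ v` annihilates `Θ` in every slot, and
nondegeneracy gives `φ ψ = ψ φ`.
-/

open Function

namespace InCenter

variable {k : Type*} [Field k] {d : ℕ} {V T : Type*} [AddCommGroup V] [Module k V]
  [AddCommGroup T] [Module k T] {Θ : MultilinearMap k (fun _ : Fin d => V) T}

theorem id : InCenter Θ LinearMap.id := by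
  intro i j v
  simp only [LinearMap.id_apply, update_eq_self]

theorem smul {φ : V →ₗ[k] V} (hφ : InCenter Θ φ) (c : k) : InCenter Θ (c • φ) := by
  intro i j v
  simp only [LinearMap.smul_apply, Θ.map_update_smul, hφ i j v]

theorem add {φ ψ : V →ₗ[k] V} (hφ : InCenter Θ φ) (hψ : InCenter Θ ψ) :
    InCenter Θ (φ + ψ) := by
  intro i j v
  simp only [LinearMap.add_apply, Θ.map_update_add, hφ i j v, hψ i j v]

theorem map_update_update_eq {φ : V →ₗ[k] V} (hφ : InCenter Θ φ) {i j l : Fin d}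
    (hil : i ≠ l) (hjl : j ≠ l) (u : V) (w : Fin d → V) :
    Θ (update (update w l u) i (φ (w i))) = Θ (update (update w l u) j (φ (w j))) := by
  simpa only [update_of_ne hil, update_of_ne hjl] using hφ i j (update w l u)

theorem map_update_comp_apply {φ : V →ₗ[k] V} (hφ : InCenter Θ φ) (ψ : V →ₗ[k] V)
    {i l : Fin d} (hil : i ≠ l) (w : Fin d → V) :
    Θ (update w i (φ (ψ (w i)))) = Θ (update (update w l (φ (w l))) i (ψ (w i))) := by
  have h := hφ i l (update w i (ψ (w i)))
  rwa [update_self, update_idem, update_of_ne hil.symm, update_comm hil] at h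

theorem map_update_comp_apply_eq_swap {φ ψ : V →ₗ[k] V} (hφ : InCenter Θ φ)
    (hψ : InCenter Θ ψ) {i l : Fin d} (hil : i ≠ l) (w : Fin d → V) :
    Θ (update w i (φ (ψ (w i)))) = Θ (update w l (ψ (φ (w l)))) := by
  rw [hφ.map_update_comp_apply ψ hil, hψ.map_update_comp_apply φ hil.symm,
    update_comm hil.symm]

theorem comp (hd : 3 ≤ d) {φ ψ : V →ₗ[k] V} (hφ : InCenter Θ φ) (hψ : InCenter Θ ψ) :
    InCenter Θ (φ ∘ₗ ψ) := by
  intro i j v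
  obtain ⟨l, hli, hlj⟩ := Fin.exists_ne_and_ne_of_two_lt i j (by omega)
  calc Θ (update v i (φ (ψ (v i))))
      = Θ (update (update v l (φ (v l))) i (ψ (v i))) :=
        hφ.map_update_comp_apply ψ hli.symm v
    _ = Θ (update (update v l (φ (v l))) j (ψ (v j))) :=
        hψ.map_update_update_eq hli.symm hlj.symm _ v
    _ = Θ (update v j (φ (ψ (v j)))) := (hφ.map_update_comp_apply ψ hlj.symm v).symm

theorem comp_comm (hd : 3 ≤ d) (hΘ : Nondeg Θ) {φ ψ : V →ₗ[k] V} (hφ : InCenter Θ φ)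
    (hψ : InCenter Θ ψ) : φ ∘ₗ ψ = ψ ∘ₗ φ := by
  ext x
  rw [← sub_eq_zero]
  refine hΘ _ fun i v => ?_
  obtain ⟨l, hli, -⟩ := Fin.exists_ne_and_ne_of_two_lt i i (by omega)
  have key := (hφ.map_update_comp_apply_eq_swap hψ hli.symm (update v i x)).trans
    ((hψ.comp hd hφ) l i (update v i x))
  simp only [update_self, update_idem, LinearMap.comp_apply] at key
  rw [LinearMap.comp_apply, LinearMap.comp_apply, Θ.map_update_sub, key, sub_self]

end InCenter

theorem center_is_commutative_subalgebra_general {k : Type*} [Field k] {d : ℕ} (hd : 3 ≤ d)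
    {V : Type*} [AddCommGroup V] [Module k V]
    (Θ : MultilinearMap k (fun _ : Fin d => V) k) (hΘ : Nondeg Θ) :
    InCenter Θ (LinearMap.id : V →ₗ[k] V) ∧
    (∀ (c : k) (φ : V →ₗ[k] V), InCenter Θ φ → InCenter Θ (c • φ)) ∧
    (∀ φ ψ : V →ₗ[k] V, InCenter Θ φ → InCenter Θ ψ → InCenter Θ (φ + ψ)) ∧
    (∀ φ ψ : V →ₗ[k] V, InCenter Θ φ → InCenter Θ ψ → InCenter Θ (φ ∘ₗ ψ)) ∧
    (∀ φ ψ : V →ₗ[k] V, InCenter Θ φ → InCenter Θ ψ → φ ∘ₗ ψ = ψ ∘ₗ φ) :=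
  ⟨InCenter.id, fun c _ hφ => hφ.smul c, fun _ _ => InCenter.add,
    fun _ _ => InCenter.comp hd, fun _ _ => InCenter.comp_comm hd hΘ⟩

/-- the center of a nondegenerate multilinear form is a commutative
subalgebra of `End V`. -/
theorem center_is_commutative_subalgebra {k : Type*} [Field k] {d : ℕ} (hd : 3 ≤ d)
    {V : Type*} [AddCommGroup V] [Module k V] [FiniteDimensional k V]
    (Θ : MultilinearMap k (fun _ : Fin d => V) k) (hΘ : Nondeg Θ) :
    InCenter Θ (LinearMap.id : V →ₗ[k] V) ∧
    (∀ (c : k) (φ : V →ₗ[k] V), InCenter Θ φ → InCenter Θ (c • φ)) ∧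
    (∀ φ ψ : V →ₗ[k] V, InCenter Θ φ → InCenter Θ ψ → InCenter Θ (φ + ψ)) ∧
    (∀ φ ψ : V →ₗ[k] V, InCenter Θ φ → InCenter Θ ψ → InCenter Θ (φ ∘ₗ ψ)) ∧
    (∀ φ ψ : V →ₗ[k] V, InCenter Θ φ → InCenter Θ ψ → φ ∘ₗ ψ = ψ ∘ₗ φ) :=
  center_is_commutative_subalgebra_general hd Θ hΘ
end

section
/- Let Θ : V^d → k be a d-linear form and suppose e_1, ..., e_s ∈ Z(V,Θ) form a complete set of orthogonal idempotents (e_i² = e_i, e_i e_j = 0 for i ≠ j, and e_1 + ... + e_s = id_V). Set V_i = e_i(V). Then V = V_1 ⊕ ... ⊕ V_s and Θ(v_1,...,v_d) = 0 whenever v_j ∈ V_{k_j} with not all k_j equal. -/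
open Function

/-!
Each `eᵢ` is the identity on its own range and kills the other ranges, so `V = ⨁ range eᵢ`.
If slots `m`, `m'` of `v` lie in different summands, let `e = e_{κ m'}`: it fixes `v m'` and
kills `v m`, and since `e` is central it may be moved from slot `m'` to slot `m`, giving
`Θ v = Θ (…, e (v m), …) = 0`.
-/

theorem DirectSum.isInternal_range_of_completeOrthogonalIdempotents {R M ι : Type*} [Ring R]
    [AddCommGroup M] [Module R M] [Fintype ι] [DecidableEq ι] {e : ι → Module.End R M}
    (he : CompleteOrthogonalIdempotents e) :
    DirectSum.IsInternal fun i => LinearMap.range (e i) := by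
  refine DirectSum.isInternal_submodule_of_iSupIndep_of_iSup_eq_top
    (fun i => (LinearMap.IsIdempotentElem.isCompl (he.idem i)).disjoint.mono_right
      (iSup₂_le fun j hji => LinearMap.range_le_ker_iff.2 (he.ortho hji.symm))) ?_
  refine eq_top_iff.2 fun x _ => ?_
  have hx : ∑ i, e i x = x := by
    rw [← LinearMap.sum_apply, he.complete, Module.End.one_apply]
  exact hx ▸ Submodule.sum_mem _ fun i _ =>
    Submodule.mem_iSup_of_mem i (LinearMap.mem_range_self _ _)

theorem InCenter.map_eq_zero_of_apply_eq_zero_of_apply_eq_self {k : Type*} [Field k] {d : ℕ}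
    {V T : Type*} [AddCommGroup V] [Module k V] [AddCommGroup T] [Module k T]
    {Θ : MultilinearMap k (fun _ : Fin d => V) T} {φ : V →ₗ[k] V} (hφ : InCenter Θ φ)
    {v : Fin d → V} {i j : Fin d} (hi : φ (v i) = 0) (hj : φ (v j) = v j) : Θ v = 0 :=
  calc Θ v = Θ (update v j (φ (v j))) := by rw [hj, update_eq_self]
    _ = Θ (update v i (φ (v i))) := hφ j i v
    _ = 0 := by rw [hi, Θ.map_update_zero]

theorem idempotents_give_decomposition_general {k : Type*} [Field k] {d : ℕ}
    {V : Type*} [AddCommGroup V] [Module k V]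
    (Θ : MultilinearMap k (fun _ : Fin d => V) k) {s : ℕ}
    (e : Fin s → (V →ₗ[k] V))
    (hcen : ∀ i, InCenter Θ (e i))
    (hidem : ∀ i, e i ∘ₗ e i = e i)
    (horth : ∀ i j, i ≠ j → e i ∘ₗ e j = 0)
    (hsum : ∑ i, e i = LinearMap.id) :
    DirectSum.IsInternal (fun i : Fin s => LinearMap.range (e i)) ∧
    (∀ (v : Fin d → V) (κ : Fin d → Fin s),
      (∀ m, v m ∈ LinearMap.range (e (κ m))) → (∃ m m', κ m ≠ κ m') → Θ v = 0) := by
  have he : CompleteOrthogonalIdempotents e := ⟨⟨hidem, horth⟩, hsum⟩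
  refine ⟨DirectSum.isInternal_range_of_completeOrthogonalIdempotents he, ?_⟩
  rintro v κ hv ⟨m, m', hκ⟩
  refine (hcen (κ m')).map_eq_zero_of_apply_eq_zero_of_apply_eq_self (i := m) (j := m') ?_
    ((LinearMap.IsIdempotentElem.mem_range_iff (he.idem _)).1 (hv m'))
  exact LinearMap.range_le_ker_iff.2 (he.ortho hκ.symm) (hv m)

/-- a complete set of orthogonal idempotents in the center of a
`d`-linear form yields a direct sum decomposition of the form. -/
theorem idempotents_give_decomposition {k : Type*} [Field k] {d : ℕ} (hd : 3 ≤ d)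
    {V : Type*} [AddCommGroup V] [Module k V] [FiniteDimensional k V]
    (Θ : MultilinearMap k (fun _ : Fin d => V) k) {s : ℕ}
    (e : Fin s → (V →ₗ[k] V))
    (hcen : ∀ i, InCenter Θ (e i))
    (hidem : ∀ i, e i ∘ₗ e i = e i)
    (horth : ∀ i j, i ≠ j → e i ∘ₗ e j = 0)
    (hsum : ∑ i, e i = LinearMap.id) :
    DirectSum.IsInternal (fun i : Fin s => LinearMap.range (e i)) ∧
    (∀ (v : Fin d → V) (κ : Fin d → Fin s),
      (∀ m, v m ∈ LinearMap.range (e (κ m))) → (∃ m m', κ m ≠ κ m') → Θ v = 0) :=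
  idempotents_give_decomposition_general Θ e hcen hidem horth hsum
end

section
/- Let Θ : V^d → k be a d-linear form and suppose V = V_1 ⊕ ... ⊕ V_s is a direct sum decomposition of Θ, meaning Θ(v_1,...,v_d) = 0 unless all v_i lie in the same summand V_j. For each i, let e_i : V → V be the projection onto V_i along the other summands. Then the e_i form a complete set of orthogonal idempotents lying in the center Z(V,Θ). -/
open Function

/-!
Expanding every argument of `Θ` as `v = ∑ t, e t v`, multilinearity and the vanishing of `Θ` on
mixed tuples leave only the diagonal terms `Θ (e t w₁, …, e t w_d)`. For a tuple with `e l` applied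
in one slot only the term `t = l` survives, and it equals `Θ (e l w₁, …, e l w_d)`, whichever slot
carried `e l`.
-/

section Projections

variable {R ι V : Type*} [CommSemiring R] [AddCommMonoid V] [Module R V] [Fintype ι]
  {W : ι → Submodule R V} {e : ι → V →ₗ[R] V}

theorem sum_projections_eq_id (htop : iSup W = ⊤) (hproj : ∀ i, ∀ v ∈ W i, e i v = v)
    (hzero : ∀ i j, i ≠ j → ∀ v ∈ W j, e i v = 0) :
    ∑ i, e i = LinearMap.id := by
  ext v
  have hv : v ∈ iSup W := htop ▸ Submodule.mem_top
  simp only [LinearMap.sum_apply, LinearMap.id_coe, id_eq]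
  induction hv using Submodule.iSup_induction' with
  | mem j x hx =>
    rw [Finset.sum_eq_single_of_mem j (Finset.mem_univ j) fun i _ hij => hzero i j hij x hx]
    exact hproj j x hx
  | zero => simp
  | add x y _ _ hx hy => rw [Finset.sum_congr rfl fun i _ => map_add (e i) x y,
      Finset.sum_add_distrib, hx, hy]

variable {κ T : Type*} [AddCommMonoid T] [Module R T] [Fintype κ] [DecidableEq κ]
  {Θ : MultilinearMap R (fun _ : κ => V) T}

theorem MultilinearMap.apply_eq_sum_apply_projections [Nonempty κ]
    (hsum : ∀ v, ∑ i, e i v = v) (hmem : ∀ i v, e i v ∈ W i)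
    (hvanish : ∀ (v : κ → V) (c : κ → ι), (∀ m, v m ∈ W (c m)) → (∃ m m', c m ≠ c m') → Θ v = 0)
    (w : κ → V) : Θ w = ∑ t, Θ (fun m => e t (w m)) := by
  let diag : ι ↪ (κ → ι) := ⟨const κ, const_injective⟩
  calc Θ w = Θ (fun m => ∑ t, e t (w m)) := by simp only [hsum]
    _ = ∑ c : κ → ι, Θ (fun m => e (c m) (w m)) := Θ.map_sum _
    _ = ∑ c ∈ Finset.univ.map diag, Θ (fun m => e (c m) (w m)) := by
      refine (Finset.sum_subset (Finset.subset_univ _) fun c _ hc => ?_).symm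
      refine hvanish _ c (fun m => hmem _ _) ?_
      by_contra! hconst
      obtain ⟨m⟩ := ‹Nonempty κ›
      exact hc (Finset.mem_map.2 ⟨c m, Finset.mem_univ _, funext (hconst m)⟩)
    _ = ∑ t, Θ (fun m => e t (w m)) := Finset.sum_map _ _ _

theorem MultilinearMap.apply_update_projection_eq (hsum : ∀ v, ∑ i, e i v = v)
    (hmem : ∀ i v, e i v ∈ W i) (hproj : ∀ i, ∀ v ∈ W i, e i v = v)
    (hzero : ∀ i j, i ≠ j → ∀ v ∈ W j, e i v = 0)
    (hvanish : ∀ (v : κ → V) (c : κ → ι), (∀ m, v m ∈ W (c m)) → (∃ m m', c m ≠ c m') → Θ v = 0)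
    (l : ι) (i : κ) (v : κ → V) :
    Θ (update v i (e l (v i))) = Θ (fun m => e l (v m)) := by
  have : Nonempty κ := ⟨i⟩
  rw [Θ.apply_eq_sum_apply_projections hsum hmem hvanish]
  refine Finset.sum_eq_single_of_mem l (Finset.mem_univ l) (fun t _ htl => ?_) |>.trans ?_
  · exact Θ.map_coord_zero i (by simpa using hzero t l htl _ (hmem l (v i)))
  · congr 1
    funext m
    by_cases hm : m = i
    · subst hm
      simpa using hproj l _ (hmem l (v m))
    · rw [update_of_ne hm]

end Projections

theorem decomposition_gives_idempotents_general {k : Type*} [Field k] {d : ℕ}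
    {V : Type*} [AddCommGroup V] [Module k V]
    (Θ : MultilinearMap k (fun _ : Fin d => V) k) {s : ℕ}
    (W : Fin s → Submodule k V)
    (hint : DirectSum.IsInternal W)
    (hvanish : ∀ (v : Fin d → V) (κ : Fin d → Fin s),
      (∀ m, v m ∈ W (κ m)) → (∃ m m', κ m ≠ κ m') → Θ v = 0)
    (e : Fin s → (V →ₗ[k] V))
    (hmem : ∀ i v, e i v ∈ W i)
    (hproj : ∀ i, ∀ v ∈ W i, e i v = v)
    (hzero : ∀ i j, i ≠ j → ∀ v ∈ W j, e i v = 0) :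
    (∀ i, e i ∘ₗ e i = e i) ∧
    (∀ i j, i ≠ j → e i ∘ₗ e j = 0) ∧
    (∑ i, e i = LinearMap.id) ∧
    (∀ i, InCenter Θ (e i)) := by
  have hid : ∑ i, e i = LinearMap.id :=
    sum_projections_eq_id hint.submodule_iSup_eq_top hproj hzero
  have hsum (v : V) : ∑ i, e i v = v := by
    simpa using LinearMap.congr_fun hid v
  refine ⟨fun i => LinearMap.ext fun v => hproj i _ (hmem i v),
    fun i j hij => LinearMap.ext fun v => hzero i j hij _ (hmem j v), hid, fun l i j v => ?_⟩
  rw [Θ.apply_update_projection_eq hsum hmem hproj hzero hvanish,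
    Θ.apply_update_projection_eq hsum hmem hproj hzero hvanish]

/-- the projections attached to a direct sum decomposition of a
`d`-linear form form a complete set of orthogonal idempotents in the center. -/
theorem decomposition_gives_idempotents {k : Type*} [Field k] {d : ℕ} (hd : 3 ≤ d)
    {V : Type*} [AddCommGroup V] [Module k V] [FiniteDimensional k V]
    (Θ : MultilinearMap k (fun _ : Fin d => V) k) {s : ℕ}
    (W : Fin s → Submodule k V)
    (hint : DirectSum.IsInternal W)
    (hvanish : ∀ (v : Fin d → V) (κ : Fin d → Fin s),
      (∀ m, v m ∈ W (κ m)) → (∃ m m', κ m ≠ κ m') → Θ v = 0)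
    (e : Fin s → (V →ₗ[k] V))
    (hmem : ∀ i v, e i v ∈ W i)
    (hproj : ∀ i, ∀ v ∈ W i, e i v = v)
    (hzero : ∀ i j, i ≠ j → ∀ v ∈ W j, e i v = 0) :
    (∀ i, e i ∘ₗ e i = e i) ∧
    (∀ i j, i ≠ j → e i ∘ₗ e j = 0) ∧
    (∑ i, e i = LinearMap.id) ∧
    (∀ i, InCenter Θ (e i)) :=
  decomposition_gives_idempotents_general Θ W hint hvanish e hmem hproj hzero
end

section
/- Let Θ : V^d → k be a nondegenerate d-linear form on a finite-dimensional vector space. Then the decomposition of (V,Θ) into a direct sum of indecomposable d-linear forms is unique up to permutation of the summands: if V = U_1 ⊕ ... ⊕ U_r = W_1 ⊕ ... ⊕ W_s are two decompositions of Θ with each restriction indecomposable, then r = s and after a permutation U_i = W_i as subspaces. -/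
open Function

/-- Indecomposability of a multilinear map: there is no splitting `V = W₁ ⊕ W₂` into
two nonzero subspaces on which `Θ` is additive (i.e. `Θ` vanishes on mixed tuples). -/
def Indec {k : Type*} [Field k] {d : ℕ} {V T : Type*} [AddCommGroup V] [Module k V]
    [AddCommGroup T] [Module k T]
    (Θ : MultilinearMap k (fun _ : Fin d => V) T) : Prop :=
  ¬ ∃ (W₁ W₂ : Submodule k V), W₁ ≠ ⊥ ∧ W₂ ≠ ⊥ ∧ IsCompl W₁ W₂ ∧
    ∀ (v w : Fin d → V), (∀ m, v m ∈ W₁) → (∀ m, w m ∈ W₂) →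
      Θ (fun m => v m + w m) = Θ v + Θ w

/-!
The projections `pᵢ` onto the summands of a decomposition of `Θ` lie in the centroid of `Θ`
(the endomorphisms that can be moved freely between the slots of `Θ`). For `d ≥ 3` and
nondegenerate `Θ` the centroid is commutative: using two spare slots, `φ` and `ψ` can be moved
out of a slot and back in the opposite order. An idempotent `e` of the centroid splits `Θ` along
`range e ⊕ ker e`, so on an indecomposable summand `Uᵢ` each `pᵢ qⱼ` acts as `0` or `1`, where
`qⱼ` are the projections of a second decomposition. As `∑ⱼ qⱼ = 1`, some `pᵢ qⱼ` is the identity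
on `Uᵢ`, i.e. `Uᵢ ≤ Wⱼ`; comparing in both directions matches the summands bijectively.
-/

namespace DirectSum.IsInternal

variable {R ι M : Type*} [Semiring R] [AddCommMonoid M] [Module R M] [DecidableEq ι]
  {U : ι → Submodule R M} (h : IsInternal U)

noncomputable def proj (i : ι) : Module.End R M :=
  (U i).subtype ∘ₗ component R ι (fun i => U i) i ∘ₗ
    (LinearEquiv.ofBijective (coeLinearMap U) h).symm.toLinearMap

theorem proj_apply (i : ι) (x : M) :
    h.proj i x = (LinearEquiv.ofBijective (coeLinearMap U) h).symm x i := rfl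

theorem proj_mem (i : ι) (x : M) : h.proj i x ∈ U i :=
  Submodule.coe_mem _

theorem proj_eq_self {i : ι} {x : M} (hx : x ∈ U i) : h.proj i x = x := by
  rw [proj_apply, h.ofBijective_coeLinearMap_of_mem hx]

theorem proj_eq_zero {i j : ι} {x : M} (hx : x ∈ U j) (hij : i ≠ j) : h.proj i x = 0 := by
  rw [proj_apply, h.ofBijective_coeLinearMap_of_mem_ne hij.symm hx, Submodule.coe_zero]

theorem proj_proj (i : ι) (x : M) : h.proj i (h.proj i x) = h.proj i x :=
  h.proj_eq_self (h.proj_mem i x)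

theorem isIdempotentElem_proj (i : ι) : IsIdempotentElem (h.proj i) :=
  LinearMap.ext (h.proj_proj i)

theorem sum_proj [Fintype ι] (x : M) : ∑ i, h.proj i x = x := by
  set e := LinearEquiv.ofBijective (coeLinearMap U) h
  conv_rhs => rw [← e.apply_symm_apply x, ← sum_univ_of (e.symm x), map_sum]
  exact Finset.sum_congr rfl fun i _ => (coeLinearMap_of U i _).symm

end DirectSum.IsInternal

namespace InCenter

variable {k V T : Type*} [Field k] [AddCommGroup V] [Module k V] [AddCommGroup T] [Module k T]
  {d : ℕ} {Θ : MultilinearMap k (fun _ : Fin d => V) T} {φ ψ : Module.End k V}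

theorem map_update_update (hφ : InCenter Θ φ) {a b : Fin d} (hab : a ≠ b) (v : Fin d → V)
    (x y : V) : Θ (update (update v a (φ x)) b y) = Θ (update (update v a x) b (φ y)) := by
  simpa [update_comm hab, update_of_ne hab, update_of_ne hab.symm] using
    hφ a b (update (update v a x) b y)

theorem commute (hd : 3 ≤ d) (hΘ : Nondeg Θ) (hφ : InCenter Θ φ) (hψ : InCenter Θ ψ) :
    Commute φ ψ := by
  ext x
  refine sub_eq_zero.1 (hΘ _ fun m v => ?_)
  obtain ⟨a, ham, -⟩ := Fin.exists_ne_and_ne_of_two_lt m m hd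
  obtain ⟨b, hba, hbm⟩ := Fin.exists_ne_and_ne_of_two_lt a m hd
  let g : V → V → V → T := fun x y z => Θ (update (update (update v b z) a y) m x)
  have move_a : ∀ χ, InCenter Θ χ → ∀ x y z, g (χ x) y z = g x (χ y) z := by
    intro χ hχ x y z
    simp only [g, update_comm ham]
    exact hχ.map_update_update ham.symm _ x y
  have move_b : ∀ χ, InCenter Θ χ → ∀ x y z, g (χ x) y z = g x y (χ z) := by
    intro χ hχ x y z
    simp only [g, update_comm hba, update_comm hbm]
    exact hχ.map_update_update hbm.symm _ x z
  have hg : ∀ x, g x (v a) (v b) = Θ (update v m x) := by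
    intro x; simp [g]
  calc Θ (update v m ((φ * ψ) x - (ψ * φ) x))
      = g (φ (ψ x)) (v a) (v b) - g (ψ (φ x)) (v a) (v b) := by
        rw [Θ.map_update_sub, hg, hg]; rfl
    _ = 0 := by
      rw [sub_eq_zero, move_a φ hφ, move_b ψ hψ, ← move_a φ hφ, ← move_b ψ hψ]

theorem mul (hφ : InCenter Θ φ) (hψ : InCenter Θ ψ) (hφψ : Commute φ ψ) :
    InCenter Θ (φ * ψ) := by
  intro a b v
  rcases eq_or_ne a b with rfl | hab
  · rfl
  calc Θ (update v a (φ (ψ (v a))))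
      = Θ (update (update v a (φ (ψ (v a)))) b (v b)) := by
        rw [update_eq_self_iff.2 (update_of_ne hab.symm _ _).symm]
    _ = Θ (update (update v a (ψ (v a))) b (φ (v b))) := hφ.map_update_update hab _ _ _
    _ = Θ (update (update v a (v a)) b (ψ (φ (v b)))) := hψ.map_update_update hab _ _ _
    _ = Θ (update v b ((φ * ψ) (v b))) := by rw [update_eq_self, hφψ.eq]; rfl

theorem one_sub (hφ : InCenter Θ φ) : InCenter Θ (1 - φ) := by
  intro a b v
  simp only [LinearMap.sub_apply, Module.End.one_apply, Θ.map_update_sub, update_eq_self, hφ a b]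

theorem restrict (hφ : InCenter Θ φ) {U : Submodule k V} (hφU : ∀ x ∈ U, φ x ∈ U) :
    InCenter (Θ.compLinearMap fun _ => U.subtype) (φ.restrict hφU) := by
  intro a b v
  have coe_update (c : Fin d) (y : U) :
      (fun t => ((update v c y t : U) : V)) = update (fun t => (v t : V)) c (y : V) :=
    funext fun t => by rcases eq_or_ne t c with rfl | h <;> simp [*]
  simpa [coe_update] using hφ a b (fun t => v t)

theorem map_apply_eq_of_apply_eq (hφ : InCenter Θ φ) {w : Fin d → V} {m : Fin d}
    (hm : φ (w m) = w m) : Θ (fun t => φ (w t)) = Θ w := by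
  -- slot `m` stays `φ`-fixed, so `φ` can be moved from it into each further slot in turn
  suffices ∀ S : Finset (Fin d), Θ (S.piecewise (fun t => φ (w t)) w) = Θ w by
    simpa using this Finset.univ
  intro S
  induction S using Finset.induction_on with
  | empty => rw [Finset.piecewise_empty]
  | insert t S ht ih =>
    set u := S.piecewise (fun t => φ (w t)) w
    have hum : φ (u m) = u m := by
      by_cases hmS : m ∈ S <;> simp [u, hmS, hm]
    rw [Finset.piecewise_insert, ← ih, show φ (w t) = φ (u t) by simp [u, ht], ← hφ m t u, hum,
      update_eq_self]

theorem map_add (hd : d ≠ 0) (hφ : InCenter Θ φ) {v w : Fin d → V} (hv : ∀ t, φ (v t) = v t)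
    (hw : ∀ t, φ (w t) = 0) : Θ (v + w) = Θ v + Θ w := by
  -- split slot `m`: in the two halves `φ`, resp. `1 - φ`, fixes slot `m`
  let m : Fin d := ⟨0, Nat.pos_of_ne_zero hd⟩
  have hΘv : Θ (update (v + w) m (v m)) = Θ v := by
    rw [← hφ.map_apply_eq_of_apply_eq (m := m) (by simp [hv])]
    congr 1; ext t; rcases eq_or_ne t m with rfl | htm <;> simp [*]
  have hΘw : Θ (update (v + w) m (w m)) = Θ w := by
    rw [← hφ.one_sub.map_apply_eq_of_apply_eq (m := m) (by simp [hw])]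
    congr 1; ext t; rcases eq_or_ne t m with rfl | htm <;> simp [*]
  rw [← hΘv, ← hΘw, ← Θ.map_update_add, ← Pi.add_apply, update_eq_self]

end InCenter

theorem Indec.eq_zero_or_eq_one {k V T : Type*} [Field k] [AddCommGroup V] [Module k V]
    [AddCommGroup T] [Module k T] {d : ℕ} {Θ : MultilinearMap k (fun _ : Fin d => V) T}
    (hΘ : Indec Θ) (hd : d ≠ 0) {q : Module.End k V} (hq : InCenter Θ q)
    (hqq : IsIdempotentElem q) : q = 0 ∨ q = 1 := by
  by_contra! hne
  refine hΘ ⟨LinearMap.range q, LinearMap.ker q, LinearMap.range_eq_bot.not.2 hne.1,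
    fun hker => hne.2 ?_, LinearMap.IsIdempotentElem.isCompl hqq, fun v w hv hw => ?_⟩
  · ext x
    exact LinearMap.ker_eq_bot.1 hker (LinearMap.congr_fun hqq x)
  · exact hq.map_add hd (fun t => (LinearMap.IsIdempotentElem.mem_range_iff hqq).1 (hv t)) hw

def VanishesOnMixedTuples {k V T ι : Type*} [Field k] [AddCommGroup V] [Module k V]
    [AddCommGroup T] [Module k T] {d : ℕ} (Θ : MultilinearMap k (fun _ : Fin d => V) T)
    (U : ι → Submodule k V) : Prop :=
  ∀ (v : Fin d → V) (c : Fin d → ι), (∀ m, v m ∈ U (c m)) → (∃ m m', c m ≠ c m') → Θ v = 0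

namespace DirectSum.IsInternal

variable {k V T ι κ : Type*} [Field k] [AddCommGroup V] [Module k V] [AddCommGroup T] [Module k T]
  [Fintype ι] [DecidableEq ι] [Fintype κ] [DecidableEq κ]
  {d : ℕ} {Θ : MultilinearMap k (fun _ : Fin d => V) T} {U : ι → Submodule k V}

theorem map_proj_of_mem (hU : IsInternal U) (hvan : VanishesOnMixedTuples Θ U) {w : Fin d → V}
    {i : ι} {m : Fin d} (hm : w m ∈ U i) : Θ (fun t => hU.proj i (w t)) = Θ w := by
  have expand : Θ w = ∑ c : Fin d → ι, Θ (fun t => hU.proj (c t) (w t)) := by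
    conv_lhs => rw [show w = fun t => ∑ j, hU.proj j (w t) from
      funext fun t => (hU.sum_proj _).symm]
    exact Θ.map_sum _
  rw [expand, Fintype.sum_eq_single (fun _ => i)]
  intro c hc
  by_cases hmixed : ∃ t t', c t ≠ c t'
  · exact hvan _ c (fun t => hU.proj_mem _ _) hmixed
  · push Not at hmixed
    exact Θ.map_coord_zero m
      (hU.proj_eq_zero hm fun h => hc (funext fun t => (hmixed t m).trans h))

theorem inCenter_proj (hU : IsInternal U) (hvan : VanishesOnMixedTuples Θ U) (i : ι) :
    InCenter Θ (hU.proj i) := by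
  have map_update_proj (a : Fin d) (v : Fin d → V) :
      Θ (update v a (hU.proj i (v a))) = Θ (fun t => hU.proj i (v t)) := by
    rw [← hU.map_proj_of_mem hvan (m := a) (by simpa using hU.proj_mem i (v a))]
    congr 1
    ext t
    rcases eq_or_ne t a with rfl | hta <;> simp [*, hU.proj_proj]
  intro a b v
  rw [map_update_proj a, map_update_proj b]

theorem exists_le_of_indec (hU : IsInternal U) (hd : 3 ≤ d) (hΘ : Nondeg Θ)
    {W : κ → Submodule k V} (hW : IsInternal W) (hUvan : VanishesOnMixedTuples Θ U)
    (hWvan : VanishesOnMixedTuples Θ W) {i : ι} (hUi : U i ≠ ⊥)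
    (hind : Indec (Θ.compLinearMap fun _ => (U i).subtype)) : ∃ j, U i ≤ W j := by
  set p := hU.proj i
  set f := hW.proj
  have hp : InCenter Θ p := hU.inCenter_proj hUvan i
  have hf (j : κ) : InCenter Θ (f j) := hW.inCenter_proj hWvan j
  have comm (j : κ) : Commute p (f j) := hp.commute hd hΘ (hf j)
  have maps (j : κ) : ∀ x ∈ U i, (p * f j) x ∈ U i := fun x _ => hU.proj_mem i _
  have idem (j : κ) : IsIdempotentElem ((p * f j).restrict (maps j)) := by
    have h := IsIdempotentElem.mul_of_commute (comm j) (hU.isIdempotentElem_proj i)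
      (hW.isIdempotentElem_proj j)
    exact LinearMap.ext fun x => Subtype.ext (LinearMap.congr_fun h x)
  have zero_or_one (j : κ) := hind.eq_zero_or_eq_one (by omega)
    ((hp.mul (hf j) (comm j)).restrict (maps j)) (idem j)
  obtain ⟨x, hx, hx0⟩ := Submodule.exists_mem_ne_zero_of_ne_bot hUi
  obtain ⟨j, hj⟩ : ∃ j, p (f j x) ≠ 0 := by
    by_contra! h
    apply hx0
    calc x = p (∑ j, f j x) := by rw [hW.sum_proj, hU.proj_eq_self hx]
      _ = 0 := by simp [h]
  refine ⟨j, fun y hy => ?_⟩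
  rcases zero_or_one j with h0 | h1
  · exact absurd congr(($h0 ⟨x, hx⟩ : V)) hj
  · have : p (f j y) = y := congr(($h1 ⟨y, hy⟩ : V))
    rw [← this, ← Module.End.mul_apply, comm j]
    exact hW.proj_mem j _

end DirectSum.IsInternal

theorem iSupIndep.eq_of_le {ι α : Type*} [CompleteLattice α] {t : ι → α} (ht : iSupIndep t)
    {i j : ι} (hi : t i ≠ ⊥) (hij : t i ≤ t j) : i = j := by
  by_contra hne
  exact hi ((ht.pairwiseDisjoint hne).eq_bot_of_le hij)

theorem decomposition_into_indecomposables_unique_general {k : Type*} [Field k] {d : ℕ}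
    (hd : 3 ≤ d) {V : Type*} [AddCommGroup V] [Module k V]
    (Θ : MultilinearMap k (fun _ : Fin d => V) k) (hΘ : Nondeg Θ)
    {r s : ℕ} (U : Fin r → Submodule k V) (W : Fin s → Submodule k V)
    (hUint : DirectSum.IsInternal U) (hWint : DirectSum.IsInternal W)
    (hUne : ∀ i, U i ≠ ⊥) (hWne : ∀ j, W j ≠ ⊥)
    (hUvanish : ∀ (v : Fin d → V) (κ : Fin d → Fin r),
      (∀ m, v m ∈ U (κ m)) → (∃ m m', κ m ≠ κ m') → Θ v = 0)
    (hWvanish : ∀ (v : Fin d → V) (κ : Fin d → Fin s),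
      (∀ m, v m ∈ W (κ m)) → (∃ m m', κ m ≠ κ m') → Θ v = 0)
    (hUind : ∀ i, Indec (Θ.compLinearMap (fun _ => (U i).subtype)))
    (hWind : ∀ j, Indec (Θ.compLinearMap (fun _ => (W j).subtype))) :
    ∃ σ : Fin r ≃ Fin s, ∀ i, U i = W (σ i) := by
  choose σ hσ using fun i =>
    hUint.exists_le_of_indec hd hΘ hWint hUvanish hWvanish (hUne i) (hUind i)
  choose τ hτ using fun j =>
    hWint.exists_le_of_indec hd hΘ hUint hWvanish hUvanish (hWne j) (hWind j)
  have hτσ (i : Fin r) : τ (σ i) = i :=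
    (hUint.submodule_iSupIndep.eq_of_le (hUne i) ((hσ i).trans (hτ (σ i)))).symm
  have hστ (j : Fin s) : σ (τ j) = j :=
    (hWint.submodule_iSupIndep.eq_of_le (hWne j) ((hτ j).trans (hσ (τ j)))).symm
  refine ⟨⟨σ, τ, hτσ, hστ⟩, fun i => le_antisymm (hσ i) ?_⟩
  simpa [hτσ i] using hτ (σ i)

/-- Krull–Schmidt for nondegenerate `d`-linear forms: a decomposition into
indecomposable summands is unique up to permutation of the summands. -/
theorem decomposition_into_indecomposables_unique {k : Type*} [Field k] {d : ℕ}
    (hd : 3 ≤ d) {V : Type*} [AddCommGroup V] [Module k V] [FiniteDimensional k V]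
    (Θ : MultilinearMap k (fun _ : Fin d => V) k) (hΘ : Nondeg Θ)
    {r s : ℕ} (U : Fin r → Submodule k V) (W : Fin s → Submodule k V)
    (hUint : DirectSum.IsInternal U) (hWint : DirectSum.IsInternal W)
    (hUne : ∀ i, U i ≠ ⊥) (hWne : ∀ j, W j ≠ ⊥)
    (hUvanish : ∀ (v : Fin d → V) (κ : Fin d → Fin r),
      (∀ m, v m ∈ U (κ m)) → (∃ m m', κ m ≠ κ m') → Θ v = 0)
    (hWvanish : ∀ (v : Fin d → V) (κ : Fin d → Fin s),
      (∀ m, v m ∈ W (κ m)) → (∃ m m', κ m ≠ κ m') → Θ v = 0)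
    (hUind : ∀ i, Indec (Θ.compLinearMap (fun _ => (U i).subtype)))
    (hWind : ∀ j, Indec (Θ.compLinearMap (fun _ => (W j).subtype))) :
    ∃ σ : Fin r ≃ Fin s, ∀ i, U i = W (σ i) :=
  decomposition_into_indecomposables_unique_general hd Θ hΘ U W hUint hWint hUne hWne hUvanish
    hWvanish hUind hWind
end

section
/- Let Θ : V^d → k be a nondegenerate d-linear form. Then (V,Θ) is indecomposable if and only if the commutative finite-dimensional algebra Z(V,Θ) is local (equivalently, has no idempotents other than 0 and 1). -/
/-!
An idempotent `φ` of the center splits `V` as `range φ ⊕ ker φ`, and the centrality of `φ`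
forces `Θ` to vanish on every tuple having one entry in `range φ` and another in `ker φ`
(move `φ` from the first slot to the second); by multilinearity `Θ` then splits along this
decomposition. Conversely, if `Θ` splits along `V = W₁ ⊕ W₂`, the projection onto `W₁` along
`W₂` is a central idempotent. So nontrivial central idempotents and nontrivial splittings
correspond to each other.
-/

open Function

open LinearMap

def SplitsAlong {k : Type*} [Field k] {d : ℕ} {V T : Type*} [AddCommGroup V] [Module k V]
    [AddCommGroup T] [Module k T]
    (Θ : MultilinearMap k (fun _ : Fin d => V) T) (W₁ W₂ : Submodule k V) : Prop :=
  ∀ (v w : Fin d → V), (∀ m, v m ∈ W₁) → (∀ m, w m ∈ W₂) →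
    Θ (fun m => v m + w m) = Θ v + Θ w

theorem MultilinearMap.map_add_eq_add_of_map_piecewise_eq_zero {R ι N : Type*} {M : ι → Type*}
    [Semiring R] [DecidableEq ι] [Fintype ι] [Nonempty ι] [∀ i, AddCommMonoid (M i)]
    [∀ i, Module R (M i)] [AddCommMonoid N] [Module R N] (f : MultilinearMap R M N)
    (v w : ∀ i, M i)
    (hmixed : ∀ s : Finset ι, s.Nonempty → s ≠ Finset.univ → f (s.piecewise v w) = 0) :
    f (v + w) = f v + f w := by
  rw [f.map_add_univ, Finset.sum_eq_add_of_mem Finset.univ ∅ (Finset.mem_univ _)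
    (Finset.mem_univ _) Finset.univ_nonempty.ne_empty, Finset.piecewise_univ,
    Finset.piecewise_empty]
  rintro s - ⟨hs_univ, hs_empty⟩
  exact hmixed s (Finset.nonempty_iff_ne_empty.mpr hs_empty) hs_univ

section

variable {k : Type*} [Field k] {d : ℕ} {V T : Type*} [AddCommGroup V] [Module k V]
  [AddCommGroup T] [Module k T] {Θ : MultilinearMap k (fun _ : Fin d => V) T}

theorem InCenter.map_eq_zero_of_mem_range_of_mem_ker {φ : V →ₗ[k] V} (hφ : InCenter Θ φ)
    (hidem : IsIdempotentElem φ) {u : Fin d → V} {i j : Fin d} (hi : u i ∈ range φ)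
    (hj : u j ∈ ker φ) : Θ u = 0 :=
  calc Θ u = Θ (update u i (φ (u i))) := by rw [(hidem.mem_range_iff).mp hi, update_eq_self]
    _ = Θ (update u j (φ (u j))) := hφ i j u
    _ = 0 := by rw [mem_ker.mp hj, Θ.map_update_zero]

theorem InCenter.splitsAlong_range_ker [NeZero d] {φ : V →ₗ[k] V} (hφ : InCenter Θ φ)
    (hidem : IsIdempotentElem φ) : SplitsAlong Θ (range φ) (ker φ) := by
  intro v w hv hw
  refine Θ.map_add_eq_add_of_map_piecewise_eq_zero v w fun s ⟨i, hi⟩ hs => ?_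
  obtain ⟨j, hj⟩ : ∃ j, j ∉ s := by simpa [Finset.eq_univ_iff_forall] using hs
  exact hφ.map_eq_zero_of_mem_range_of_mem_ker hidem
    (by rw [Finset.piecewise_eq_of_mem _ _ _ hi]; exact hv i)
    (by rw [Finset.piecewise_eq_of_notMem _ _ _ hj]; exact hw j)

theorem SplitsAlong.inCenter_projection {W₁ W₂ : Submodule k V} (hs : SplitsAlong Θ W₁ W₂)
    (hc : IsCompl W₁ W₂) : InCenter Θ (W₁.projection W₂ hc) := by
  set P := W₁.projection W₂ hc
  set Q := W₂.projection W₁ hc.symm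
  -- `update v l (P (v l))` is the `W₁`-tuple `P ∘ v` plus a `W₂`-tuple with a zero entry.
  have hslot : ∀ v l, Θ (update v l (P (v l))) = Θ (fun m => P (v m)) := by
    intro v l
    have hdecomp :
        update v l (P (v l)) = fun m => P (v m) + update (fun m => Q (v m)) l 0 m := by
      funext m
      rcases eq_or_ne m l with rfl | hm
      · simp
      · simp [update_of_ne hm, P, Q, Submodule.projection_add_projection_eq_self]
    have hW₂ : ∀ m, update (fun m => Q (v m)) l 0 m ∈ W₂ := by
      intro m
      rcases eq_or_ne m l with rfl | hm
      · simp
      · simp [update_of_ne hm, Q]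
    rw [hdecomp, hs _ _ (fun m => Submodule.projection_apply_mem hc (v m)) hW₂,
      Θ.map_update_zero, add_zero]
  intro i j v
  rw [hslot v i, hslot v j]

end

theorem indecomposable_iff_center_local_general {k : Type*} [Field k] {d : ℕ} (hd : 3 ≤ d)
    {V : Type*} [AddCommGroup V] [Module k V]
    (Θ : MultilinearMap k (fun _ : Fin d => V) k) :
    Indec Θ ↔
      ∀ φ : V →ₗ[k] V, InCenter Θ φ → φ ∘ₗ φ = φ →
        φ = 0 ∨ φ = LinearMap.id := by
  have : NeZero d := ⟨by omega⟩
  constructor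
  · intro hind φ hφ hφφ
    have hidem : IsIdempotentElem φ := hφφ
    by_contra! hne
    refine hind ⟨range φ, ker φ, ?_, ?_, hidem.isCompl, hφ.splitsAlong_range_ker hidem⟩
    · exact hidem.isProj_range.submodule_eq_bot_iff.not.mpr hne.1
    · rw [hidem.ker_eq_range_one_sub, Ne, hidem.one_sub.isProj_range.submodule_eq_bot_iff,
        sub_eq_zero]
      exact fun h => hne.2 h.symm
  · rintro hloc ⟨W₁, W₂, hW₁, hW₂, hc, hs⟩
    rcases hloc _ (SplitsAlong.inCenter_projection hs hc)
      (Submodule.isIdempotentElem_projection hc) with h | h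
    · exact hW₁ (by rw [← Submodule.range_projection hc, h, range_zero])
    · exact hW₂ (by rw [← Submodule.ker_projection hc, h, ker_id])

/-- a nondegenerate `d`-linear form is indecomposable iff its center has no
idempotents other than `0` and `1` (i.e. the center is a local algebra). -/
theorem indecomposable_iff_center_local {k : Type*} [Field k] {d : ℕ} (hd : 3 ≤ d)
    {V : Type*} [AddCommGroup V] [Module k V] [FiniteDimensional k V]
    (Θ : MultilinearMap k (fun _ : Fin d => V) k) (hΘ : Nondeg Θ) :
    Indec Θ ↔
      ∀ φ : V →ₗ[k] V, InCenter Θ φ → φ ∘ₗ φ = φ →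
        φ = 0 ∨ φ = LinearMap.id :=
  indecomposable_iff_center_local_general hd Θ
end

section
/- If Z(V,Θ) ≅ k (i.e., the center of the nondegenerate d-linear form Θ consists only of scalar multiples of the identity), then (V,Θ) is indecomposable, and moreover remains indecomposable after any field extension K/k (applied to Θ ⊗ K). -/
/-!
A splitting `V = W₁ ⊕ W₂` on which `Θ` is additive makes the projection onto `W₁` along `W₂`
central: writing `x = πx + (x - πx)`, additivity gives `Θ x = Θ (πx) + Θ (x - πx)`, and if `x`
has `π` applied in slot `i` then `x - πx` vanishes in that slot. A nontrivial idempotent is not a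
scalar, so a central form is indecomposable.

Centrality survives extension of scalars: for a `k`-linear functional `λ` on `K`, applying
`λ ⊗ id` to the `V`-component of a central `φ` on `K ⊗ V` gives a central endomorphism of `V`,
hence a scalar `c λ`. Since `K ⊗ V` is separated by these contractions, `φ (1 ⊗ v) = a ⊗ v` for a
single `a ∈ K` with `λ a = c λ`, and `K`-linearity gives `φ = a • id`.
-/

open Function

open TensorProduct

def IsCentral {k : Type*} [Field k] {d : ℕ} {V T : Type*} [AddCommGroup V] [Module k V]
    [AddCommGroup T] [Module k T] (Θ : MultilinearMap k (fun _ : Fin d => V) T) : Prop :=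
  ∀ φ : V →ₗ[k] V, InCenter Θ φ → ∃ c : k, φ = c • LinearMap.id

namespace TensorProduct

variable {R M N : Type*} [CommRing R] [AddCommGroup M] [Module R M] [AddCommGroup N] [Module R N]

theorem ext_of_forall_lid_rTensor [Module.Free R M] {x y : M ⊗[R] N}
    (h : ∀ f : Module.Dual R M,
      TensorProduct.lid R N (f.rTensor N x) = TensorProduct.lid R N (f.rTensor N y)) :
    x = y := by
  classical
  let B := Module.Free.chooseBasis R M
  refine (equivFinsuppOfBasisLeft B).injective (Finsupp.ext fun i => ?_)
  simp only [equivFinsuppOfBasisLeft_apply]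
  exact h (B.coord i)

theorem apply_rid_lTensor_eq_apply_lid_rTensor (g : Module.Dual R M) (f : Module.Dual R N)
    (z : M ⊗[R] N) :
    g (TensorProduct.rid R M (f.lTensor M z)) = f (TensorProduct.lid R N (g.rTensor N z)) := by
  induction z using TensorProduct.induction_on with
  | zero => simp
  | tmul m n => simp [mul_comm]
  | add x y hx hy => simp only [map_add, hx, hy]

end TensorProduct

section Indecomposable

variable {k : Type*} [Field k] {d : ℕ} {V T : Type*} [AddCommGroup V] [Module k V]
  [AddCommGroup T] [Module k T] {Θ : MultilinearMap k (fun _ : Fin d => V) T}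

theorem inCenter_projection {p q : Submodule k V} (hpq : IsCompl p q)
    (hadd : ∀ v w : Fin d → V, (∀ m, v m ∈ p) → (∀ m, w m ∈ q) →
      Θ (fun m => v m + w m) = Θ v + Θ w) :
    InCenter Θ (p.projection q hpq) := by
  set π := p.projection q hpq
  have hππ : ∀ x, π (π x) = π x := fun x => congr($(Submodule.isIdempotentElem_projection hpq) x)
  have hsplit : ∀ x : Fin d → V, Θ x = Θ (fun m => π (x m)) + Θ (fun m => x m - π (x m)) :=
    fun x => by
      simpa using hadd (fun m => π (x m)) (fun m => x m - π (x m))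
        (fun m => Submodule.projection_apply_mem hpq (x m))
        (fun m => (Submodule.projection_apply_eq_zero_iff hpq).1 (by rw [map_sub, hππ, sub_self]))
  have hslot : ∀ i v, Θ (update v i (π (v i))) = Θ (fun m => π (v m)) := by
    intro i v
    have hproj : (fun m => π (update v i (π (v i)) m)) = fun m => π (v m) := by
      funext m
      rcases eq_or_ne m i with rfl | hm
      · simp [hππ]
      · simp [hm]
    have hzero : Θ (fun m => update v i (π (v i)) m - π (update v i (π (v i)) m)) = 0 :=
      Θ.map_coord_zero i (by rw [update_self, hππ, sub_self])
    rw [hsplit, hproj, hzero, add_zero]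
  exact fun i j v => (hslot i v).trans (hslot j v).symm

theorem IsCentral.indec (hΘ : IsCentral Θ) : Indec Θ := by
  rintro ⟨W₁, W₂, hW₁, hW₂, hcompl, hadd⟩
  obtain ⟨c, hc⟩ := hΘ _ (inCenter_projection hcompl hadd)
  obtain ⟨w₁, hw₁, hw₁0⟩ := W₁.ne_bot_iff.1 hW₁
  obtain ⟨w₂, hw₂, hw₂0⟩ := W₂.ne_bot_iff.1 hW₂
  have h₁ := Submodule.projection_apply_of_mem_left hcompl hw₁
  have h₂ := Submodule.projection_apply_of_mem_right hcompl hw₂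
  rw [hc] at h₁ h₂
  have hc0 : c = 0 := (smul_eq_zero.1 h₂).resolve_right hw₂0
  exact hw₁0 (by simpa [hc0] using h₁.symm)

end Indecomposable

theorem dual_apply_map_update_one_tmul {k K : Type*} [CommRing k] [CommRing K] [Algebra k K]
    {d : ℕ} {V : Type*} [AddCommGroup V] [Module k V]
    {Θ : MultilinearMap k (fun _ : Fin d => V) k}
    {Θ' : MultilinearMap K (fun _ : Fin d => K ⊗[k] V) K}
    (hΘ' : ∀ v : Fin d → V, Θ' (fun m => (1 : K) ⊗ₜ[k] v m) = algebraMap k K (Θ v))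
    (f : Module.Dual k K) (u : Fin d → V) (i : Fin d) (x : K ⊗[k] V) :
    f (Θ' (update (fun m => (1 : K) ⊗ₜ[k] u m) i x)) =
      Θ (update u i (TensorProduct.lid k V (f.rTensor V x))) := by
  induction x using TensorProduct.induction_on with
  | zero => simp
  | tmul b w =>
    have hu : update (fun m => (1 : K) ⊗ₜ[k] u m) i ((1 : K) ⊗ₜ[k] w) =
        fun m => (1 : K) ⊗ₜ[k] update u i w m :=
      (comp_update _ u i w).symm
    conv_lhs => rw [tmul_eq_smul_one_tmul b w]
    rw [Θ'.map_update_smul, hu, hΘ', smul_eq_mul, mul_comm, ← Algebra.smul_def, map_smul,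
      LinearMap.rTensor_tmul, lid_tmul, Θ.map_update_smul, smul_eq_mul, smul_eq_mul, mul_comm]
  | add x y hx hy => rw [Θ'.map_update_add, map_add, hx, hy, map_add, map_add, Θ.map_update_add]

theorem IsCentral.baseChange {k K : Type*} [Field k] [Field K] [Algebra k K] {d : ℕ} {V : Type*}
    [AddCommGroup V] [Module k V] {Θ : MultilinearMap k (fun _ : Fin d => V) k}
    (hΘ : IsCentral Θ) {Θ' : MultilinearMap K (fun _ : Fin d => K ⊗[k] V) K}
    (hΘ' : ∀ v : Fin d → V, Θ' (fun m => (1 : K) ⊗ₜ[k] v m) = algebraMap k K (Θ v)) :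
    IsCentral Θ' := by
  intro φ hφ
  rcases subsingleton_or_nontrivial V with hV | hV
  · exact ⟨0, Subsingleton.elim _ _⟩
  have hcoord (f : Module.Dual k K) : ∃ c : k,
      TensorProduct.lid k V ∘ₗ f.rTensor V ∘ₗ φ.restrictScalars k ∘ₗ TensorProduct.mk k K V 1
        = c • LinearMap.id :=
    hΘ _ fun i j u => by
      simpa [dual_apply_map_update_one_tmul hΘ'] using congrArg f (hφ i j fun m => 1 ⊗ₜ u m)
  choose c hc using hcoord
  have hφc (f : Module.Dual k K) (v : V) :
      TensorProduct.lid k V (f.rTensor V (φ (1 ⊗ₜ v))) = c f • v :=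
    LinearMap.congr_fun (hc f) v
  obtain ⟨v₀, hv₀⟩ := exists_ne (0 : V)
  obtain ⟨g, hg⟩ := Module.Projective.exists_dual_eq_one k hv₀
  set a := TensorProduct.rid k K (g.lTensor K (φ (1 ⊗ₜ v₀)))
  have ha (f : Module.Dual k K) : f a = c f := by
    rw [apply_rid_lTensor_eq_apply_lid_rTensor, hφc, map_smul, hg, smul_eq_mul, mul_one]
  have hpure (v : V) : φ (1 ⊗ₜ v) = a ⊗ₜ v :=
    ext_of_forall_lid_rTensor fun f => by rw [hφc, LinearMap.rTensor_tmul, lid_tmul, ha]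
  refine ⟨a, AlgebraTensorModule.ext fun b v => ?_⟩
  rw [LinearMap.smul_apply, LinearMap.id_apply, tmul_eq_smul_one_tmul b v, map_smul, hpure,
    smul_comm, ← tmul_eq_smul_one_tmul]

open TensorProduct in
theorem central_implies_absolutely_indecomposable_general {k : Type*} [Field k] {d : ℕ}
    {V : Type*} [AddCommGroup V] [Module k V]
    (Θ : MultilinearMap k (fun _ : Fin d => V) k)
    (hcentral : ∀ φ : V →ₗ[k] V, InCenter Θ φ → ∃ c : k, φ = c • LinearMap.id) :
    Indec Θ ∧
    ∀ (K : Type*) [Field K] [Algebra k K]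
      (Θ' : MultilinearMap K (fun _ : Fin d => K ⊗[k] V) K),
      (∀ v : Fin d → V, Θ' (fun m => (1 : K) ⊗ₜ[k] v m) = algebraMap k K (Θ v)) →
      Indec Θ' :=
  ⟨IsCentral.indec hcentral, fun _ _ _ _ hΘ' => (IsCentral.baseChange hcentral hΘ').indec⟩

open TensorProduct in
/-- a central nondegenerate `d`-linear form is indecomposable and remains
indecomposable after any field extension `K/k`. -/
theorem central_implies_absolutely_indecomposable {k : Type*} [Field k] {d : ℕ}
    (hd : 3 ≤ d) {V : Type*} [AddCommGroup V] [Module k V] [FiniteDimensional k V]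
    (Θ : MultilinearMap k (fun _ : Fin d => V) k) (hΘ : Nondeg Θ)
    (hcentral : ∀ φ : V →ₗ[k] V, InCenter Θ φ → ∃ c : k, φ = c • LinearMap.id) :
    Indec Θ ∧
    ∀ (K : Type*) [Field K] [Algebra k K]
      (Θ' : MultilinearMap K (fun _ : Fin d => K ⊗[k] V) K),
      (∀ v : Fin d → V, Θ' (fun m => (1 : K) ⊗ₜ[k] v m) = algebraMap k K (Θ v)) →
      Indec Θ' :=
  central_implies_absolutely_indecomposable_general Θ hcentral
end

section
/- Let V = k² with basis e_1, e_2 and let Θ be the d-linear form (d ≥ 3) with Θ(e_{i_1},...,e_{i_d}) = a_{i_1 i_2} where (a_{ij}) = [[1,-1],[1,0]]. Then Z(V,Θ) = k·id, i.e., every φ ∈ End(V) satisfying the center condition for Θ is a scalar multiple of the identity. -/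
open Function

/-!
Evaluate the center condition in slots `0` and `2` on basis vectors. Since `Θ` sees a basis vector
in slot `2` only through the sum of its coordinates, this gives `Mᵀ A = λ A`, where `M` is the
matrix of `φ`, `A = [[1,-1],[1,0]]` and `λ` is the coordinate sum of `φ e₁`. As `det A = 1`,
`M = λ • 1`.
-/

open Matrix

theorem MultilinearMap.map_update_pi_single_eq_sum {R ι n M : Type*} [CommSemiring R]
    [DecidableEq ι] [Fintype n] [DecidableEq n] [AddCommMonoid M] [Module R M]
    (Θ : MultilinearMap R (fun _ : ι => n → R) M) (idx : ι → n) (i : ι) (w : n → R) :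
    Θ (update (fun m => Pi.single (idx m) 1) i w) =
      ∑ r, w r • Θ (fun m => Pi.single (update idx i r m) 1) := by
  conv_lhs => rw [pi_eq_sum_univ' w]
  rw [Θ.map_update_sum]
  refine Finset.sum_congr rfl fun r _ => ?_
  rw [Θ.map_update_smul]
  congr 2
  exact (comp_update (fun r => (Pi.single r 1 : n → R)) idx i r).symm

theorem Matrix.eq_smul_one_of_mul_eq_smul {K n : Type*} [Field K] [Fintype n] [DecidableEq n]
    {A M : Matrix n n K} {c : K} (hA : IsUnit A.det) (h : M * A = c • A) : M = c • 1 := by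
  calc M = M * A * A⁻¹ := by rw [mul_nonsing_inv_cancel_right _ _ hA]
    _ = c • 1 := by rw [h, smul_mul, mul_nonsing_inv _ hA]

theorem InCenter.toMatrix'_transpose_mul_eq_smul {k : Type*} [Field k] {d : ℕ} {n : Type*}
    [Fintype n] [DecidableEq n] {Θ : MultilinearMap k (fun _ : Fin d => n → k) k}
    {B : Matrix n n k} {i₀ i₁ j : Fin d} (h₀₁ : i₀ ≠ i₁) (hj₀ : j ≠ i₀) (hj₁ : j ≠ i₁)
    (hΘ : ∀ idx : Fin d → n, Θ (fun m => Pi.single (idx m) 1) = B (idx i₀) (idx i₁))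
    {φ : (n → k) →ₗ[k] (n → k)} (hφ : InCenter Θ φ) (base : n) :
    (LinearMap.toMatrix' φ)ᵀ * B = (∑ r, φ (Pi.single base 1) r) • B := by
  ext s t
  let idx : Fin d → n := update (update (fun _ => base) i₀ s) i₁ t
  have hcenter := hφ i₀ j (fun m => Pi.single (idx m) 1)
  simp only [Θ.map_update_pi_single_eq_sum, hΘ] at hcenter
  simpa [idx, mul_apply, update_apply, h₀₁, h₀₁.symm, hj₀, hj₁, hj₀.symm, hj₁.symm,
    Finset.sum_mul] using hcenter

/-- the `d`-linear form on `k²` whose coefficient tensor is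
`a_{i₁…i_d} = a_{i₁ i₂}` with `(a_{ij}) = [[1,-1],[1,0]]` has trivial center. -/
theorem explicit_central_form {k : Type*} [Field k] {d : ℕ} (hd : 3 ≤ d)
    (Θ : MultilinearMap k (fun _ : Fin d => (Fin 2 → k)) k)
    (hΘ : ∀ idx : Fin d → Fin 2,
      Θ (fun m => Pi.single (idx m) (1 : k)) =
        !![(1 : k), -1; 1, 0] (idx ⟨0, by omega⟩) (idx ⟨1, by omega⟩)) :
    ∀ φ : (Fin 2 → k) →ₗ[k] (Fin 2 → k), InCenter Θ φ →
      ∃ c : k, φ = c • LinearMap.id := by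
  intro φ hφ
  have hB := InCenter.toMatrix'_transpose_mul_eq_smul (j := ⟨2, by omega⟩)
    (by simp) (by simp) (by simp) hΘ hφ 0
  have hM := congrArg transpose (eq_smul_one_of_mul_eq_smul (by simp [det_fin_two]) hB)
  refine ⟨∑ r, φ (Pi.single 0 1) r, LinearMap.toMatrix'.injective ?_⟩
  simpa [LinearMap.toMatrix'_id] using hM
end

section
/- Let Δ : U^d → S and Θ : V^d → T be nondegenerate multilinear maps that are symmetrically equivalent via bijections φ_1,...,φ_d : U → V and ψ : S → T. Then for all k, l, the composition φ_k⁻¹ ∘ φ_l lies in the center Z(U,S,Δ), and φ_k ∘ φ_l⁻¹ lies in Z(V,T,Θ). -/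
open Function

/-!
Symmetric equivalence says `ψ ∘ Δ = Θ ∘ (φ_{σ 1} × ⋯ × φ_{σ d})` for every permutation `σ`.
For slots `i ≠ j` choose `σ` with `σ i = p`, `σ j = q`, and let `τ = σ ∘ (i j)`. Putting
`φ_p⁻¹ φ_q u_i` into slot `i` and reading it through `σ`, or putting `φ_p⁻¹ φ_q u_j` into slot `j`
and reading it through `τ`, gives the same argument of `Θ`; this is the centre condition for `Δ`.
Writing `v ∈ V^d` as `(φ_{σ m} u_m)_m` turns the centre condition for `φ_p φ_q⁻¹` on `Θ` into the
one for `φ_q⁻¹ φ_p` on `Δ`.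
-/

lemma exists_perm_apply_eq_and_apply_eq {α : Type*} [DecidableEq α] {i j p q : α}
    (hij : i ≠ j) (hpq : p ≠ q) : ∃ σ : Equiv.Perm α, σ i = p ∧ σ j = q := by
  refine ⟨(Equiv.swap i p).trans (Equiv.swap (Equiv.swap i p j) q), ?_, ?_⟩
  · simp only [Equiv.trans_apply, Equiv.swap_apply_left]
    apply Equiv.swap_apply_of_ne_of_ne _ hpq
    intro h
    exact hij ((Equiv.swap i p).injective ((Equiv.swap_apply_left i p).trans h))
  · simp only [Equiv.trans_apply, Equiv.swap_apply_left]

def SymmEquiv {k : Type*} [Field k] {d : ℕ} {U V S T : Type*} [AddCommGroup U] [Module k U]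
    [AddCommGroup V] [Module k V] [AddCommGroup S] [Module k S] [AddCommGroup T] [Module k T]
    (Δ : MultilinearMap k (fun _ : Fin d => U) S) (Θ : MultilinearMap k (fun _ : Fin d => V) T)
    (φ : Fin d → (U ≃ₗ[k] V)) (ψ : S ≃ₗ[k] T) : Prop :=
  ∀ (σ : Equiv.Perm (Fin d)) (u : Fin d → U), ψ (Δ u) = Θ (fun m => φ (σ m) (u m))

namespace SymmEquiv

variable {k : Type*} [Field k] {d : ℕ} {U V S T : Type*} [AddCommGroup U] [Module k U]
  [AddCommGroup V] [Module k V] [AddCommGroup S] [Module k S] [AddCommGroup T] [Module k T]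
  {Δ : MultilinearMap k (fun _ : Fin d => U) S} {Θ : MultilinearMap k (fun _ : Fin d => V) T}
  {φ : Fin d → (U ≃ₗ[k] V)} {ψ : S ≃ₗ[k] T}

theorem map_update (h : SymmEquiv Δ Θ φ ψ) (σ : Equiv.Perm (Fin d)) (u : Fin d → U) (i : Fin d)
    (x : U) : ψ (Δ (update u i x)) = Θ (update (fun m => φ (σ m) (u m)) i (φ (σ i) x)) := by
  rw [h σ]
  congr 1
  funext m
  exact apply_update (fun m => φ (σ m)) u i x m

theorem inCenter_left (h : SymmEquiv Δ Θ φ ψ) (p q : Fin d) :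
    InCenter Δ ((φ q).trans (φ p).symm).toLinearMap := by
  intro i j u
  rcases eq_or_ne i j with rfl | hij
  · rfl
  rcases eq_or_ne p q with rfl | hpq
  · simp
  obtain ⟨σ, hσi, hσj⟩ := exists_perm_apply_eq_and_apply_eq hij hpq
  set τ := σ * Equiv.swap i j
  have hτj : τ j = p := by simp [τ, hσi]
  apply ψ.injective
  rw [h.map_update σ, h.map_update τ, hσi, hτj]
  congr 1
  funext m
  rcases eq_or_ne m i with rfl | hmi
  · simp [τ, hσj, hij]
  rcases eq_or_ne m j with rfl | hmj
  · simp [hσj, hmi]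
  · simp [τ, hmi, hmj, Equiv.swap_apply_of_ne_of_ne]

theorem inCenter_right (h : SymmEquiv Δ Θ φ ψ) (p q : Fin d) :
    InCenter Θ ((φ q).symm.trans (φ p)).toLinearMap := by
  intro i j v
  rcases eq_or_ne i j with rfl | hij
  · rfl
  rcases eq_or_ne p q with rfl | hpq
  · simp
  obtain ⟨σ, hσi, hσj⟩ := exists_perm_apply_eq_and_apply_eq hij hpq
  set u := fun m => (φ (σ m)).symm (v m)
  have hv : v = fun m => φ (σ m) (u m) := by simp [u]
  have key := congrArg ψ (h.inCenter_left q p i j u)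
  rw [h.map_update σ, h.map_update σ] at key
  rw [hv]
  convert key using 3 <;> simp [hσi, hσj]

end SymmEquiv

theorem symEquiv_center_elements_general {k : Type*} [Field k] {d : ℕ}
    {U V S T : Type*} [AddCommGroup U] [Module k U]
    [AddCommGroup V] [Module k V]
    [AddCommGroup S] [Module k S]
    [AddCommGroup T] [Module k T]
    (Δ : MultilinearMap k (fun _ : Fin d => U) S)
    (Θ : MultilinearMap k (fun _ : Fin d => V) T)
    (φ : Fin d → (U ≃ₗ[k] V)) (ψ : S ≃ₗ[k] T)
    (hequiv : ∀ (σ : Equiv.Perm (Fin d)) (u : Fin d → U),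
      ψ (Δ u) = Θ (fun m => φ (σ m) (u m))) :
    ∀ p q : Fin d,
      InCenter Δ ((φ q).trans (φ p).symm).toLinearMap ∧
      InCenter Θ ((φ q).symm.trans (φ p)).toLinearMap :=
  fun p q => ⟨SymmEquiv.inCenter_left hequiv p q, SymmEquiv.inCenter_right hequiv p q⟩

/-- if nondegenerate multilinear maps `Δ` and `Θ` are symmetrically
equivalent via `φ₁, …, φ_d` and `ψ`, then `φ_p⁻¹ ∘ φ_q ∈ Z(U,S,Δ)` and
`φ_p ∘ φ_q⁻¹ ∈ Z(V,T,Θ)` for all `p, q`. -/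
theorem symEquiv_center_elements {k : Type*} [Field k] {d : ℕ} (hd : 3 ≤ d)
    {U V S T : Type*} [AddCommGroup U] [Module k U] [FiniteDimensional k U]
    [AddCommGroup V] [Module k V] [FiniteDimensional k V]
    [AddCommGroup S] [Module k S] [FiniteDimensional k S]
    [AddCommGroup T] [Module k T] [FiniteDimensional k T]
    (Δ : MultilinearMap k (fun _ : Fin d => U) S)
    (Θ : MultilinearMap k (fun _ : Fin d => V) T)
    (hΔ : Nondeg Δ) (hΘ : Nondeg Θ)
    (φ : Fin d → (U ≃ₗ[k] V)) (ψ : S ≃ₗ[k] T)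
    (hequiv : ∀ (σ : Equiv.Perm (Fin d)) (u : Fin d → U),
      ψ (Δ u) = Θ (fun m => φ (σ m) (u m))) :
    ∀ p q : Fin d,
      InCenter Δ ((φ q).trans (φ p).symm).toLinearMap ∧
      InCenter Θ ((φ q).symm.trans (φ p)).toLinearMap :=
  symEquiv_center_elements_general Δ Θ φ ψ hequiv
end

section
/- Let k be an algebraically closed field of characteristic zero or coprime to d. Two d-linear maps Δ : U^d → S and Θ : V^d → T are symmetrically equivalent if and only if they are isomorphic. -/
/-!
Let `φ_m` and `ψ` realize a symmetric equivalence and put `C_m = φ_m ∘ φ_0⁻¹`. Comparing the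
defining identity for two permutations that differ by a transposition shows that every `C_m` lies
in the center of `Θ`, i.e. can be moved from any slot of `Θ` to any other. For `d ≥ 3` the center
is a subalgebra of `End V`, and moving all the `C_m` into one slot turns them into a single central
automorphism `Z`. Since `k` is algebraically closed and `d` is invertible in `k`, `Z` has a `d`-th
root `r` that is a polynomial in `Z` (Lagrange interpolation gives a `d`-th root modulo nilpotents,
Newton's method makes it exact), so `r` is central too; spreading `r ^ d = Z` back over the `d`
slots shows that `r ∘ φ_0` together with `ψ` is an isomorphism.
-/

open Function

open Polynomial

theorem natCast_ne_zero_of_ringChar {R : Type*} [NonAssocRing R] [Nontrivial R] {d : ℕ}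
    (hchar : ringChar R = 0 ∨ (ringChar R).Coprime d) (hd : d ≠ 0) : (d : R) ≠ 0 := by
  rw [Ne, ringChar.spec]
  rintro hdvd
  rcases hchar with h0 | hcop
  · exact hd (zero_dvd_iff.1 (h0 ▸ hdvd))
  · exact CharP.ringChar_ne_one (hcop.eq_one_of_dvd hdvd)

theorem exists_pow_eq_of_isNilpotent_pow_sub {S : Type*} [CommRing S] {d : ℕ} (hd : d ≠ 0)
    (hdS : IsUnit (d : S)) {z x : S} (hz : IsUnit z) (hx : IsNilpotent (x ^ d - z)) :
    ∃ r : S, r ^ d = z := by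
  have hxd : IsUnit (x ^ d) := by
    simpa using hx.isUnit_add_left_of_commute hz (Commute.all _ _)
  have hP : IsNilpotent (aeval x (X ^ d - C z)) := by simpa using hx
  have hP' : IsUnit (aeval x (derivative (X ^ d - C z))) := by
    rw [derivative_sub, derivative_X_pow, derivative_C, sub_zero, map_mul, aeval_C, aeval_X_pow]
    exact (by simpa using hdS : IsUnit (algebraMap S S d)).mul (((isUnit_pow_iff hd).1 hxd).pow _)
  obtain ⟨r, -, hr⟩ := (existsUnique_nilpotent_sub_and_aeval_eq_zero hP hP').exists
  exact ⟨r, by simpa [sub_eq_zero] using hr⟩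

theorem exists_isNilpotent_aeval_pow_sub {k A : Type*} [Field k] [IsAlgClosed k] [Ring A]
    [Algebra k A] {a : A} (ha : IsIntegral k a) {d : ℕ} (hd : d ≠ 0) :
    ∃ p : k[X], IsNilpotent (aeval a p ^ d - a) := by
  classical
  -- `g` is the radical of the minimal polynomial and `p` takes a `d`-th root at each of its roots
  obtain ⟨g, n, hg, -, hfg⟩ := exists_squarefree_dvd_pow_of_ne_zero (minpoly.ne_zero ha)
  choose μ hμ using fun c : k => IsAlgClosed.exists_pow_nat_eq c (Nat.pos_of_ne_zero hd)
  set p := Lagrange.interpolate g.roots.toFinset id μ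
  have hgp : g ∣ p ^ d - X := by
    by_cases h0 : p ^ d - X = 0
    · rw [h0]; exact dvd_zero g
    refine (IsAlgClosed.splits g).dvd_of_roots_le_roots hg.ne_zero
      ((Multiset.le_iff_subset (nodup_roots (PerfectField.separable_iff_squarefree.2 hg))).2
        fun c hc => (mem_roots h0).2 ?_)
    have : eval c p = μ c :=
      Lagrange.eval_interpolate_at_node μ (Set.injOn_id _) (Multiset.mem_toFinset.2 hc)
    simp [this, hμ]
  have : aeval a ((p ^ d - X) ^ n) = 0 :=
    aeval_eq_zero_of_dvd_aeval_eq_zero (hfg.trans (pow_dvd_pow_of_dvd hgp n)) (minpoly.aeval k a)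
  exact ⟨p, n, by simpa using this⟩

theorem isUnit_self_adjoin_singleton {k A : Type*} [Field k] [Ring A] [Algebra k A] {a : A}
    (hi : IsIntegral k a) (ha : IsUnit a) :
    IsUnit (⟨a, Algebra.self_mem_adjoin_singleton k a⟩ : Algebra.adjoin k {a}) := by
  have : Module.Finite k (Algebra.adjoin k {a}) := Algebra.finite_adjoin_simple_of_isIntegral hi
  have : IsArtinianRing (Algebra.adjoin k {a}) := IsArtinianRing.of_finite k _
  exact IsArtinianRing.isUnit_of_mem_nonZeroDivisors <|
    comap_nonZeroDivisors_le_of_injective (f := (Algebra.adjoin k {a}).val) Subtype.val_injective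
      ha.mem_nonZeroDivisors

theorem exists_mem_adjoin_pow_eq {k A : Type*} [Field k] [IsAlgClosed k] [Ring A]
    [Algebra k A] {a : A} (hi : IsIntegral k a) (ha : IsUnit a) {d : ℕ} (hd : (d : k) ≠ 0) :
    ∃ r ∈ Algebra.adjoin k {a}, r ^ d = a := by
  have hd0 : d ≠ 0 := by rintro rfl; exact hd Nat.cast_zero
  obtain ⟨p, n, hp⟩ := exists_isNilpotent_aeval_pow_sub hi hd0
  let b : Algebra.adjoin k {a} := ⟨a, Algebra.self_mem_adjoin_singleton k a⟩
  have hpb : IsNilpotent (aeval b p ^ d - b) := ⟨n, Subtype.ext (by simpa [b] using hp)⟩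
  obtain ⟨r, hr⟩ := exists_pow_eq_of_isNilpotent_pow_sub hd0
    (by simpa using (IsUnit.mk0 _ hd).map (algebraMap k (Algebra.adjoin k {a})))
    (isUnit_self_adjoin_singleton hi ha) hpb
  exact ⟨r, r.2, congrArg Subtype.val hr⟩

section Center

variable {k : Type*} [Field k] {d : ℕ} {V T : Type*} [AddCommGroup V] [Module k V]
  [AddCommGroup T] [Module k T] {Θ : MultilinearMap k (fun _ : Fin d => V) T}

theorem inCenter_algebraMap (c : k) : InCenter Θ (algebraMap k (Module.End k V) c) := by
  intro i j v
  simp [Θ.map_update_smul]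

theorem InCenter.add_s18 {x y : Module.End k V} (hx : InCenter Θ x) (hy : InCenter Θ y) :
    InCenter Θ (x + y) := by
  intro i j v
  simp only [LinearMap.add_apply, Θ.map_update_add, hx i j v, hy i j v]

theorem InCenter.map_update_mul {x : Module.End k V} (hx : InCenter Θ x) (y : Module.End k V)
    {i l : Fin d} (hli : l ≠ i) (v : Fin d → V) :
    Θ (update v i ((x * y) (v i))) = Θ (update (update v l (x (v l))) i (y (v i))) := by
  have := hx i l (update v i (y (v i)))
  rwa [update_self, update_idem, update_of_ne hli, update_comm hli.symm] at this

theorem InCenter.mul_s18 (hd : 3 ≤ d) {x y : Module.End k V} (hx : InCenter Θ x) (hy : InCenter Θ y) :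
    InCenter Θ (x * y) := by
  intro i j v
  obtain ⟨l, hli, hlj⟩ := Fin.exists_ne_and_ne_of_two_lt i j hd
  have := hy i j (update v l (x (v l)))
  rw [update_of_ne hli.symm, update_of_ne hlj.symm] at this
  rw [hx.map_update_mul y hli, hx.map_update_mul y hlj, this]

variable (Θ) in
def centerSubalgebra (hd : 3 ≤ d) : Subalgebra k (Module.End k V) where
  carrier := {x | InCenter Θ x}
  mul_mem' := InCenter.mul_s18 hd
  add_mem' := InCenter.add_s18
  algebraMap_mem' := inCenter_algebraMap

theorem InCenter.map_ite_eq_map_update_prod {C : Fin d → Module.End k V}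
    (hC : ∀ m, InCenter Θ (C m)) {i : Fin d} {l : List (Fin d)} (hl : l.Nodup) (hi : i ∉ l)
    (v : Fin d → V) :
    Θ (fun m => if m ∈ l then C m (v m) else v m) = Θ (update v i ((l.map C).prod (v i))) := by
  induction l generalizing v with
  | nil => simp
  | cons a l ih =>
    obtain ⟨hal, hl⟩ := List.nodup_cons.1 hl
    obtain ⟨hia, hil⟩ := not_or.1 (List.mem_cons.not.1 hi)
    have hv : (fun m => if m ∈ a :: l then C m (v m) else v m)
        = fun m => if m ∈ l then C m (update v a (C a (v a)) m) else update v a (C a (v a)) m := by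
      funext m
      rcases eq_or_ne m a with rfl | hma
      · simp [hal]
      · simp [hma]
    rw [hv, ih hl hil, update_of_ne hia, List.map_cons, List.prod_cons,
      (hC a).map_update_mul _ (Ne.symm hia)]

theorem InCenter.map_eq_map_update_prod {C : Fin d → Module.End k V}
    (hC : ∀ m, InCenter Θ (C m)) (i : Fin d) (v : Fin d → V) :
    Θ (fun m => C m (v m))
      = Θ (update v i (((((List.finRange d).erase i).map C).prod * C i) (v i))) := by
  have hv : (fun m => C m (v m)) = fun m => if m ∈ (List.finRange d).erase i
      then C m (update v i (C i (v i)) m) else update v i (C i (v i)) m := by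
    funext m
    rcases eq_or_ne m i with rfl | hmi
    · simp [(List.nodup_finRange d).mem_erase_iff]
    · simp [(List.nodup_finRange d).mem_erase_iff, hmi]
  rw [hv, InCenter.map_ite_eq_map_update_prod hC ((List.nodup_finRange d).erase i)
    ((List.nodup_finRange d).not_mem_erase), update_self, update_idem, Module.End.mul_apply]

theorem InCenter.map_apply_eq_map_update_pow {x : Module.End k V} (hx : InCenter Θ x)
    (i : Fin d) (v : Fin d → V) :
    Θ (fun m => x (v m)) = Θ (update v i ((x ^ d) (v i))) := by
  rw [InCenter.map_eq_map_update_prod (fun _ => hx) i v, List.map_const', List.prod_replicate,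
    List.length_erase_of_mem (List.mem_finRange i), List.length_finRange, ← pow_succ,
    Nat.sub_add_cancel i.pos]

end Center

theorem Equiv.Perm.exists_apply_eq_and_apply_eq {α : Type*} [DecidableEq α] {i j a b : α}
    (hij : i ≠ j) (hab : a ≠ b) : ∃ σ : Equiv.Perm α, σ i = a ∧ σ j = b := by
  have hj : Equiv.swap i a j ≠ a := by
    simpa using (Equiv.swap i a).injective.ne hij.symm
  refine ⟨Equiv.swap i a |>.trans (Equiv.swap (Equiv.swap i a j) b), ?_, ?_⟩
  · simp [Equiv.swap_apply_of_ne_of_ne hj.symm hab]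
  · simp

section SymmEquiv

variable {k : Type*} [Field k] {d : ℕ} {U V T : Type*} [AddCommGroup U] [Module k U]
  [AddCommGroup V] [Module k V] [AddCommGroup T] [Module k T]
  {Θ : MultilinearMap k (fun _ : Fin d => V) T}

theorem inCenter_trans_of_map_perm_eq {φ : Fin d → U ≃ₗ[k] V}
    (hφ : ∀ (σ τ : Equiv.Perm (Fin d)) (u : Fin d → U),
      Θ (fun m => φ (σ m) (u m)) = Θ (fun m => φ (τ m) (u m)))
    (a b : Fin d) : InCenter Θ ((φ b).symm.trans (φ a)).toLinearMap := by
  intro i j v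
  rcases eq_or_ne i j with rfl | hij
  · rfl
  rcases eq_or_ne a b with rfl | hab
  · simp
  obtain ⟨σ, hσi, hσj⟩ := Equiv.Perm.exists_apply_eq_and_apply_eq hij hab
  change Θ (update v i ((φ b).symm.trans (φ a) (v i)))
    = Θ (update v j ((φ b).symm.trans (φ a) (v j)))
  set w := update v i ((φ b).symm.trans (φ a) (v i))
  set u : Fin d → U := fun m => (φ (σ m)).symm (w m)
  have hσ : (fun m => φ (σ m) (u m)) = w := by
    funext m
    simp [u]
  have hτ : (fun m => φ ((Equiv.swap i j).trans σ m) (u m))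
      = update v j ((φ b).symm.trans (φ a) (v j)) := by
    funext m
    rcases eq_or_ne m i with rfl | hmi
    · simp [u, w, hσi, hσj, hij]
    rcases eq_or_ne m j with rfl | hmj
    · simp [u, w, hσi, hσj, hmi]
    · simp [u, w, Equiv.swap_apply_of_ne_of_ne hmi hmj, hmi, hmj]
  rw [← hσ, ← hτ, hφ]

end SymmEquiv

theorem symEquiv_iff_iso_of_algClosed_general {k : Type*} [Field k] [IsAlgClosed k]
    {d : ℕ} (hd : 3 ≤ d) (hchar : ringChar k = 0 ∨ (ringChar k).Coprime d)
    {U V S T : Type*} [AddCommGroup U] [Module k U]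
    [AddCommGroup V] [Module k V] [FiniteDimensional k V]
    [AddCommGroup S] [Module k S]
    [AddCommGroup T] [Module k T]
    (Δ : MultilinearMap k (fun _ : Fin d => U) S)
    (Θ : MultilinearMap k (fun _ : Fin d => V) T) :
    (∃ (φ : Fin d → (U ≃ₗ[k] V)) (ψ : S ≃ₗ[k] T),
      ∀ (σ : Equiv.Perm (Fin d)) (u : Fin d → U),
        ψ (Δ u) = Θ (fun m => φ (σ m) (u m))) ↔
    (∃ (φ : U ≃ₗ[k] V) (ψ : S ≃ₗ[k] T),
      ∀ u : Fin d → U, ψ (Δ u) = Θ (fun m => φ (u m))) := by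
  refine ⟨fun ⟨φ, ψ, H⟩ => ?_, fun ⟨φ, ψ, H⟩ => ⟨fun _ => φ, ψ, fun _ u => H u⟩⟩
  let i₀ : Fin d := ⟨0, by omega⟩
  let C : Fin d → Module.End k V := fun m => ((φ i₀).symm.trans (φ m)).toLinearMap
  let M := (centerSubalgebra Θ hd).toSubmonoid ⊓ IsUnit.submonoid (Module.End k V)
  have hC : ∀ m, InCenter Θ (C m) :=
    fun m => inCenter_trans_of_map_perm_eq (fun σ τ u => (H σ u).symm.trans (H τ u)) m i₀
  have hCM : ∀ m, C m ∈ M :=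
    fun m => ⟨hC m, (Module.End.isUnit_iff _).2 ((φ i₀).symm.trans (φ m)).bijective⟩
  let Z := (((List.finRange d).erase i₀).map C).prod * C i₀
  obtain ⟨hZc, hZu⟩ : Z ∈ M := mul_mem (list_prod_mem (by simpa using fun m _ => hCM m)) (hCM i₀)
  obtain ⟨r, hr, hrZ⟩ := exists_mem_adjoin_pow_eq (Algebra.IsIntegral.isIntegral Z) hZu
    (natCast_ne_zero_of_ringChar hchar (by omega))
  have hrc : InCenter Θ r := Algebra.adjoin_le (Set.singleton_subset_iff.2 hZc) hr
  have hru : IsUnit r := (isUnit_pow_iff (by omega)).1 (hrZ ▸ hZu)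
  refine ⟨(φ i₀).trans (.ofBijective r ((Module.End.isUnit_iff r).1 hru)), ψ, fun u => ?_⟩
  calc ψ (Δ u) = Θ (fun m => C m (φ i₀ (u m))) := by simp [H 1 u, C]
    _ = Θ (fun m => r (φ i₀ (u m))) := by
      rw [hrc.map_apply_eq_map_update_pow i₀, hrZ, InCenter.map_eq_map_update_prod hC i₀]

/-- over an algebraically closed field of characteristic zero or coprime
to `d`, two `d`-linear maps are symmetrically equivalent iff they are isomorphic. -/
theorem symEquiv_iff_iso_of_algClosed {k : Type*} [Field k] [IsAlgClosed k]
    {d : ℕ} (hd : 3 ≤ d) (hchar : ringChar k = 0 ∨ (ringChar k).Coprime d)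
    {U V S T : Type*} [AddCommGroup U] [Module k U] [FiniteDimensional k U]
    [AddCommGroup V] [Module k V] [FiniteDimensional k V]
    [AddCommGroup S] [Module k S] [FiniteDimensional k S]
    [AddCommGroup T] [Module k T] [FiniteDimensional k T]
    (Δ : MultilinearMap k (fun _ : Fin d => U) S)
    (Θ : MultilinearMap k (fun _ : Fin d => V) T) :
    (∃ (φ : Fin d → (U ≃ₗ[k] V)) (ψ : S ≃ₗ[k] T),
      ∀ (σ : Equiv.Perm (Fin d)) (u : Fin d → U),
        ψ (Δ u) = Θ (fun m => φ (σ m) (u m))) ↔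
    (∃ (φ : U ≃ₗ[k] V) (ψ : S ≃ₗ[k] T),
      ∀ u : Fin d → U, ψ (Δ u) = Θ (fun m => φ (u m))) :=
  symEquiv_iff_iso_of_algClosed_general hd hchar Δ Θ
end
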